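/- Let h(x) = ‖x‖²/2 on ℝ^d and let f be convex with h ≤ f ≤ R·h pointwise for some R ≥ 1 (possibly R = ∞, in which case drop the upper bound). Then for every t > 0, f* ≤ (f + t·h)* + t·(1 + √(1 − R^{-1}))²·h pointwise, where f* denotes the Legendre–Fenchel transform. -/

import Mathlib

/-!
Write `a = ‖x‖`, `b = ‖y‖`, `S = R + t` and `c = (1 + √(1 - R⁻¹))²`. Each term `⟪x, y⟫ - f y` of
`f*(x)` is compared with `(f + t h)*(x)` in one of two ways. If `b² ≤ c a²`, the term at `y` itself
gives `⟪x, y⟫ - f y ≤ (f + t h)*(x) + t h(y) ≤ (f + t h)*(x) + t c h(x)`. Otherwise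
`b ≥ (1 + √(1 - R⁻¹)) a`; then `f + t h ≤ S h`, so testing `(f + t h)*` at `(a / (S b)) • y`, together
with `f y ≥ h(y)`, bounds the gap by `a b - b²/2 - a²/(2S) ≤ (R⁻¹ - S⁻¹) a²/2`, which is at most
`t c h(x)`.
-/

open scoped RealInnerProductSpace

noncomputable section

/-- The self-polar function `h(x) = ‖x‖²/2`. -/
def hFun {d : ℕ} (x : EuclideanSpace ℝ (Fin d)) : ℝ := ‖x‖ ^ 2 / 2

/-- The Legendre–Fenchel transform `f*(x) = sup_y (⟨x,y⟩ − f(y))`. -/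
def legR {d : ℕ} (f : EuclideanSpace ℝ (Fin d) → ℝ) (x : EuclideanSpace ℝ (Fin d)) : ℝ :=
  sSup (Set.range fun y => ⟪x, y⟫ - f y)

section Conjugate

variable {d : ℕ} {g : EuclideanSpace ℝ (Fin d) → ℝ}

lemma hFun_smul (c : ℝ) (y : EuclideanSpace ℝ (Fin d)) : hFun (c • y) = c ^ 2 * hFun y := by
  simp only [hFun, norm_smul, mul_pow, Real.norm_eq_abs, sq_abs]
  ring

lemma inner_sub_hFun_le_hFun (x y : EuclideanSpace ℝ (Fin d)) : ⟪x, y⟫ - hFun y ≤ hFun x := by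
  have := norm_sub_sq_real x y
  have := sq_nonneg ‖x - y‖
  unfold hFun
  linarith

lemma bddAbove_range_inner_sub (hg : ∀ y, hFun y ≤ g y) (x : EuclideanSpace ℝ (Fin d)) :
    BddAbove (Set.range fun y => ⟪x, y⟫ - g y) := by
  refine ⟨hFun x, ?_⟩
  rintro _ ⟨y, rfl⟩
  linarith [inner_sub_hFun_le_hFun x y, hg y]

lemma inner_sub_le_legR (hg : ∀ y, hFun y ≤ g y) (x y : EuclideanSpace ℝ (Fin d)) :
    ⟪x, y⟫ - g y ≤ legR g x :=
  le_csSup (bddAbove_range_inner_sub hg x) ⟨y, rfl⟩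

lemma legR_le {x : EuclideanSpace ℝ (Fin d)} {M : ℝ} (h : ∀ y, ⟪x, y⟫ - g y ≤ M) :
    legR g x ≤ M :=
  csSup_le (Set.range_nonempty _) (Set.forall_mem_range.2 h)

lemma smul_inner_sub_le_legR {S : ℝ} (hg : ∀ y, hFun y ≤ g y) (hgS : ∀ y, g y ≤ S * hFun y)
    (x y : EuclideanSpace ℝ (Fin d)) (c : ℝ) :
    c * ⟪x, y⟫ - S * c ^ 2 * hFun y ≤ legR g x := by
  have h := inner_sub_le_legR hg x (c • y)
  have hgS' := hgS (c • y)
  rw [real_inner_smul_right] at h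
  rw [hFun_smul, ← mul_assoc] at hgS'
  linarith

end Conjugate

section Estimate

variable {R t u a b : ℝ}

lemma mul_sub_sq_div_two_le (ha : 0 ≤ a) (hu : 0 ≤ u) (hb : (1 + u) * a ≤ b) :
    a * b - b ^ 2 / 2 ≤ (1 - u ^ 2) * a ^ 2 / 2 := by
  nlinarith [mul_nonneg (by nlinarith : 0 ≤ b - a - u * a) (by nlinarith : 0 ≤ b - a + u * a)]

lemma inv_sub_inv_add_le_self (hR : 1 ≤ R) (ht : 0 ≤ t) : R⁻¹ - (R + t)⁻¹ ≤ t := by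
  have hR0 : 0 < R := by linarith
  calc R⁻¹ - (R + t)⁻¹ = t / (R * (R + t)) := by field_simp; ring
    _ ≤ t := div_le_self ht (by nlinarith)

lemma sub_le_add_of_one_add_mul_le {p fy G : ℝ} (hR : 1 ≤ R) (ht : 0 ≤ t) (hu : 0 ≤ u)
    (hu2 : u ^ 2 = 1 - R⁻¹) (ha : 0 ≤ a) (hb : 0 < b) (hfar : (1 + u) * a ≤ b)
    (hp : p ≤ a * b) (hfy : b ^ 2 / 2 ≤ fy)
    (hG : ∀ c, c * p - (R + t) * c ^ 2 * (b ^ 2 / 2) ≤ G) :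
    p - fy ≤ G + t * (1 + u) ^ 2 * (a ^ 2 / 2) := by
  set S := R + t
  have hS : 1 ≤ S := by linarith
  set k := a / (S * b)
  have hk : k * (S * b) = a := div_mul_cancel₀ a (by positivity)
  have hk0 : 0 ≤ k := by positivity
  have hk1 : k ≤ 1 := div_le_one_of_le₀ (by nlinarith) (by positivity)
  have htest : k * p - S⁻¹ * a ^ 2 / 2 ≤ G := by
    have hval : S * k ^ 2 * (b ^ 2 / 2) = S⁻¹ * a ^ 2 / 2 := by
      rw [← hk]; field_simp
    linarith [hG k]
  have hlin : p * (1 - k) ≤ a * b - S⁻¹ * a ^ 2 := by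
    have : a * b * k = S⁻¹ * a ^ 2 := by rw [← hk]; field_simp
    nlinarith [mul_le_mul_of_nonneg_right hp (by linarith : 0 ≤ 1 - k)]
  have hquad := mul_sub_sq_div_two_le ha hu hfar
  rw [hu2, sub_sub_cancel] at hquad
  have hinv : R⁻¹ - S⁻¹ ≤ t * (1 + u) ^ 2 :=
    (inv_sub_inv_add_le_self hR ht).trans (le_mul_of_one_le_right ht (by nlinarith))
  calc p - fy ≤ (a * b - b ^ 2 / 2 - S⁻¹ * a ^ 2 / 2) + G := by
        have : p = p * (1 - k) + k * p := by ring
        linarith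
    _ ≤ (R⁻¹ - S⁻¹) * a ^ 2 / 2 + G := by linarith
    _ ≤ G + t * (1 + u) ^ 2 * (a ^ 2 / 2) := by
        nlinarith [mul_le_mul_of_nonneg_right hinv (sq_nonneg a)]

lemma sub_le_add_of_conj_bounds {p fy G : ℝ} (hR : 1 ≤ R) (ht : 0 ≤ t) (hu : 0 ≤ u)
    (hu2 : u ^ 2 = 1 - R⁻¹) (ha : 0 ≤ a) (hb : 0 ≤ b) (hp : p ≤ a * b) (hfy : b ^ 2 / 2 ≤ fy)
    (hG₁ : p - (fy + t * (b ^ 2 / 2)) ≤ G)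
    (hG₂ : ∀ c, c * p - (R + t) * c ^ 2 * (b ^ 2 / 2) ≤ G) :
    p - fy ≤ G + t * (1 + u) ^ 2 * (a ^ 2 / 2) := by
  rcases le_or_gt b ((1 + u) * a) with hnear | hfar
  · have : b ^ 2 ≤ (1 + u) ^ 2 * a ^ 2 := by rw [← mul_pow]; exact pow_le_pow_left₀ hb hnear 2
    nlinarith
  · exact sub_le_add_of_one_add_mul_le hR ht hu hu2 ha (by nlinarith) hfar.le hp hfy hG₂

end Estimate

theorem legendre_perturbation_sharp_bound_general {d : ℕ}
    (f : EuclideanSpace ℝ (Fin d) → ℝ)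
    (R : ℝ) (hR : 1 ≤ R) (hlb : ∀ x, hFun x ≤ f x) (hub : ∀ x, f x ≤ R * hFun x)
    (t : ℝ) (ht : 0 < t) :
    ∀ x, legR f x ≤ legR (fun y => f y + t * hFun y) x
        + t * (1 + Real.sqrt (1 - R⁻¹)) ^ 2 * hFun x := by
  intro x
  have hu2 : Real.sqrt (1 - R⁻¹) ^ 2 = 1 - R⁻¹ :=
    Real.sq_sqrt (sub_nonneg.2 (inv_le_one_of_one_le₀ hR))
  have hg_lb : ∀ y, hFun y ≤ f y + t * hFun y := fun y =>
    le_add_of_le_of_nonneg (hlb y) (mul_nonneg ht.le (by unfold hFun; positivity))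
  have hg_ub : ∀ y, f y + t * hFun y ≤ (R + t) * hFun y := fun y => by linarith [hub y]
  refine legR_le fun y => ?_
  exact sub_le_add_of_conj_bounds hR ht.le (Real.sqrt_nonneg _) hu2 (norm_nonneg x) (norm_nonneg y)
    (real_inner_le_norm x y) (hlb y) (inner_sub_le_legR hg_lb x y)
    (smul_inner_sub_le_legR hg_lb hg_ub x y)

/-- If `f` is convex with `h ≤ f ≤ R h` for some `R ≥ 1`, where `h(x) = ‖x‖²/2`, then for
every `t > 0`, `f* ≤ (f + t h)* + t (1 + √(1 − R⁻¹))² h` pointwise. -/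
theorem legendre_perturbation_sharp_bound {d : ℕ}
    (f : EuclideanSpace ℝ (Fin d) → ℝ) (hconv : ConvexOn ℝ Set.univ f) (hf0 : f 0 = 0)
    (R : ℝ) (hR : 1 ≤ R) (hlb : ∀ x, hFun x ≤ f x) (hub : ∀ x, f x ≤ R * hFun x)
    (t : ℝ) (ht : 0 < t) :
    ∀ x, legR f x ≤ legR (fun y => f y + t * hFun y) x
        + t * (1 + Real.sqrt (1 - R⁻¹)) ^ 2 * hFun x :=
  legendre_perturbation_sharp_bound_general f R hR hlb hub t ht
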